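/- Let $m$ be a positive integer and $K^* \in \mathbb{R}^{m\times m}$ an arbitrary matrix. Let $K_U \in \mathbb{R}^{m\times m}$ be a diagonal matrix with nonnegative diagonal entries and let $\mathcal{K} : \mathbb{R}^{m\times m} \to \mathbb{R}^{m\times m}$ be a linear map that maps skew-symmetric matrices to skew-symmetric matrices and satisfies $\mathrm{tr}(A^\top \mathcal{K}(A)) \ge 0$ for all $A$. Let $O, L : [0,\infty) \to \mathbb{R}^{m\times m}$ be differentiable with, for all $t \ge 0$: $L(t)$ diagonal, $O(t)$ orthogonal, $\dot L(t) = U(t)$ and $\dot O(t) = O(t)\,\Omega(t)$, where $X(t) := O(t)^\top \exp(L(t)) O(t)$, $B_1(t) := \exp(L(t)) - O(t) K^* O(t)^\top$, $B_2(t) := X(t) K^{*\top} - K^{*\top} X(t)$, $U(t) := -K_U \exp(-L(t))\,\mathrm{diag}(B_1(t))$, and $\Omega(t) := \mathcal{K}\big((B_2(t) - B_2(t)^\top)/2\big)$. Then the function $t \mapsto \|K^* - X(t)\|_F$ (Frobenius norm) is nonincreasing on $[0,\infty)$; in particular $\|K^* - X(t)\|_F \le \|K^* - X(0)\|_F$ for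 all $t \ge 0$, and the trajectory $\tilde K(t) = K^* - X(t)$ is globally bounded. -/

import Mathlib

/-!
The squared error `V = ‖K* - X‖² = tr((K* - X)ᵀ (K* - X))` is a Lyapunov function.
Differentiating `X = Oᵀ e^L O` gives `Ẋ = [X, Ω] + Oᵀ (e^L U) O`, and `V̇ = -2 tr((K* - X)ᵀ Ẋ)`.
Paired with `K* - X`, the commutator part equals `tr(Aᵀ 𝒦 A)` for `A` the skew part of `B₂`,
and the diagonal part equals `∑ᵢ (K_U)ᵢᵢ (B₁)ᵢᵢ²`, because conjugation by `O` turns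
`(K* - X)ᵀ` into `-B₁ᵀ` while `e^L U = -K_U diag B₁`. Both are nonnegative, so `V̇ ≤ 0`.
-/

open Matrix NormedSpace

attribute [local instance] Matrix.frobeniusNormedAddCommGroup Matrix.frobeniusNormedSpace
  Matrix.frobeniusNormedRing Matrix.frobeniusNormedAlgebra

theorem LinearMap.hasDerivWithinAt_comp {E F : Type*} [NormedAddCommGroup E] [NormedSpace ℝ E]
    [FiniteDimensional ℝ E] [NormedAddCommGroup F] [NormedSpace ℝ F] (φ : E →ₗ[ℝ] F)
    {g : ℝ → E} {g' : E} {s : Set ℝ} {t : ℝ} (h : HasDerivWithinAt g g' s t) :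
    HasDerivWithinAt (fun x => φ (g x)) (φ g') s t :=
  (LinearMap.toContinuousLinearMap φ).hasFDerivAt.comp_hasDerivWithinAt t h

namespace Matrix

variable {m n R : Type*} [Fintype m] [Fintype n]

section Algebra

variable [DecidableEq n]

theorem IsDiag.mul [NonUnitalNonAssocSemiring R] {A B : Matrix n n R} (hA : A.IsDiag)
    (hB : B.IsDiag) : (A * B).IsDiag := by
  rw [← hA.diagonal_diag, ← hB.diagonal_diag, diagonal_mul_diagonal]
  exact isDiag_diagonal _

theorem IsDiag.commute [NonUnitalNonAssocCommSemiring R] {A B : Matrix n n R} (hA : A.IsDiag)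
    (hB : B.IsDiag) : Commute A B := by
  rw [← hA.diagonal_diag, ← hB.diagonal_diag]
  exact commute_diagonal _ _

theorem trace_transpose_sub_mul_conj [CommRing R] {O E K M : Matrix n n R} (hO : O * Oᵀ = 1) :
    ((K - Oᵀ * E * O)ᵀ * (Oᵀ * M * O)).trace = ((O * K * Oᵀ - E)ᵀ * M).trace := by
  have hconj : O * (K - Oᵀ * E * O)ᵀ * Oᵀ = (O * K * Oᵀ - E)ᵀ := by
    simp only [transpose_sub, transpose_mul, transpose_transpose, Matrix.mul_sub, Matrix.sub_mul]
    rw [← Matrix.mul_assoc O, ← Matrix.mul_assoc, hO, Matrix.one_mul, Matrix.mul_assoc Eᵀ, hO,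
      Matrix.mul_one, Matrix.mul_assoc]
  rw [← hconj]
  conv_rhs => rw [Matrix.mul_assoc, Matrix.mul_assoc, trace_mul_comm]
  simp only [Matrix.mul_assoc]

theorem trace_transpose_mul_mul_diagonal_diag_nonneg [CommRing R] [LinearOrder R]
    [IsStrictOrderedRing R] {D : Matrix n n R} (hD : D.IsDiag) (hD₀ : ∀ i, 0 ≤ D i i)
    (B : Matrix n n R) : 0 ≤ (Bᵀ * (D * diagonal B.diag)).trace := by
  rw [← hD.diagonal_diag, diagonal_mul_diagonal, trace]
  simp only [diag_apply, mul_diagonal, transpose_apply]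
  exact Finset.sum_nonneg fun i _ => by nlinarith [hD₀ i, mul_self_nonneg (B i i)]

end Algebra

theorem trace_transpose_sub_mul_commutator {K X Ω : Matrix n n ℝ} (hX : Xᵀ = X)
    (hΩ : Ωᵀ = -Ω) :
    ((K - X)ᵀ * (X * Ω - Ω * X)).trace =
      (((1 / 2 : ℝ) • ((X * Kᵀ - Kᵀ * X) - (X * Kᵀ - Kᵀ * X)ᵀ))ᵀ * Ω).trace := by
  have hskew : ∀ A : Matrix n n ℝ, (Aᵀ * Ω).trace = -(A * Ω).trace := fun A => by
    rw [← trace_transpose, transpose_mul, transpose_transpose, hΩ, Matrix.neg_mul, trace_neg,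
      trace_mul_comm]
  simp only [transpose_smul, transpose_sub, transpose_transpose, hX, Matrix.smul_mul,
    trace_smul, Matrix.sub_mul, Matrix.mul_sub, trace_sub, hskew]
  rw [trace_mul_cycle' X Ω X, trace_mul_cycle' Kᵀ Ω X]
  simp only [Matrix.mul_assoc, smul_eq_mul]
  ring

theorem frobenius_norm_sq_eq_trace (A : Matrix m n ℝ) : ‖A‖ ^ 2 = (Aᵀ * A).trace := by
  have h0 : (0 : ℝ) ≤ ∑ i, ∑ j, ‖A i j‖ ^ (2 : ℝ) := by positivity
  rw [frobenius_norm_def, ← Real.rpow_natCast, ← Real.rpow_mul h0, Finset.sum_comm]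
  norm_num [trace, mul_apply, sq]

variable {s : Set ℝ} {t : ℝ}

theorem _root_.HasDerivWithinAt.matrix_transpose {A : ℝ → Matrix m n ℝ} {A' : Matrix m n ℝ}
    (h : HasDerivWithinAt A A' s t) : HasDerivWithinAt (fun x => (A x)ᵀ) A'ᵀ s t :=
  (transposeLinearEquiv m n ℝ ℝ).toLinearMap.hasDerivWithinAt_comp h

theorem _root_.HasDerivWithinAt.matrix_trace {A : ℝ → Matrix n n ℝ} {A' : Matrix n n ℝ}
    (h : HasDerivWithinAt A A' s t) : HasDerivWithinAt (fun x => (A x).trace) A'.trace s t :=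
  (traceLinearMap n ℝ ℝ).hasDerivWithinAt_comp h

variable [DecidableEq n]

theorem exp_eq_diagonal_of_isDiag {A : Matrix n n ℝ} (h : A.IsDiag) :
    exp A = diagonal fun i => Real.exp (A i i) := by
  conv_lhs => rw [← h.diagonal_diag]
  rw [exp_diagonal, Pi.exp_def]
  simp_rw [← Real.exp_eq_exp_ℝ]
  rfl

theorem IsDiag.exp {A : Matrix n n ℝ} (h : A.IsDiag) : (exp A).IsDiag := by
  rw [exp_eq_diagonal_of_isDiag h]
  exact isDiag_diagonal _

theorem IsDiag.exp_mul_mul_exp_neg {L D : Matrix n n ℝ} (hL : L.IsDiag) (hD : D.IsDiag) :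
    NormedSpace.exp L * D * NormedSpace.exp (-L) = D := by
  rw [(hL.exp.commute hD).eq, Matrix.mul_assoc, ← exp_add_of_commute _ _ (Commute.refl L).neg_right,
    add_neg_cancel, exp_zero, Matrix.mul_one]

theorem hasDerivWithinAt_exp_of_isDiag {L : ℝ → Matrix n n ℝ} {L' : Matrix n n ℝ}
    (hL : ∀ x ∈ s, (L x).IsDiag) (ht : t ∈ s) (hL' : L'.IsDiag)
    (h : HasDerivWithinAt L L' s t) :
    HasDerivWithinAt (fun x => exp (L x)) (exp (L t) * L') s t := by
  have hdiag : HasDerivWithinAt (fun x => diag (L x)) (diag L') s t :=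
    (diagLinearMap n ℝ ℝ).hasDerivWithinAt_comp h
  have hexp : HasDerivWithinAt (fun x i => Real.exp (L x i i))
      (fun i => Real.exp (L t i i) * L' i i) s t :=
    hasDerivWithinAt_pi.2 fun i => (hasDerivWithinAt_pi.1 hdiag i).exp
  rw [exp_eq_diagonal_of_isDiag (hL t ht), ← hL'.diagonal_diag, diagonal_mul_diagonal]
  exact ((diagonalLinearMap n ℝ ℝ).hasDerivWithinAt_comp hexp).congr
    (fun x hx => exp_eq_diagonal_of_isDiag (hL x hx)) (exp_eq_diagonal_of_isDiag (hL t ht))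

theorem hasDerivWithinAt_transpose_mul_mul {O E : ℝ → Matrix n n ℝ} {Ω E' : Matrix n n ℝ}
    (hΩ : Ωᵀ = -Ω) (hO : HasDerivWithinAt O (O t * Ω) s t) (hE : HasDerivWithinAt E E' s t) :
    HasDerivWithinAt (fun x => (O x)ᵀ * E x * O x)
      ((O t)ᵀ * E t * O t * Ω - Ω * ((O t)ᵀ * E t * O t) + (O t)ᵀ * E' * O t) s t := by
  refine ((hO.matrix_transpose.mul hE).mul hO).congr_deriv ?_
  rw [Pi.mul_apply, transpose_mul, hΩ]
  noncomm_ring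

theorem hasDerivWithinAt_frobenius_norm_sq_sub (K : Matrix n n ℝ) {X : ℝ → Matrix n n ℝ}
    {X' : Matrix n n ℝ} (h : HasDerivWithinAt X X' s t) :
    HasDerivWithinAt (fun x => ‖K - X x‖ ^ 2) (-2 * ((K - X t)ᵀ * X').trace) s t := by
  simp_rw [frobenius_norm_sq_eq_trace]
  refine ((h.const_sub K).matrix_transpose.mul (h.const_sub K)).matrix_trace.congr_deriv ?_
  rw [trace_add, ← trace_transpose_mul, transpose_transpose, trace_mul_comm]
  simp only [Matrix.mul_neg, trace_neg]
  ring

theorem antitoneOn_norm_sub_of_hasDerivWithinAt {D : Set ℝ} (hD : Convex ℝ D)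
    (K : Matrix n n ℝ) {X X' : ℝ → Matrix n n ℝ} (hX : ∀ t ∈ D, HasDerivWithinAt X (X' t) D t)
    (hX' : ∀ t ∈ D, 0 ≤ ((K - X t)ᵀ * X' t).trace) :
    AntitoneOn (fun t => ‖K - X t‖) D := by
  have hsq : AntitoneOn (fun t => ‖K - X t‖ ^ 2) D := by
    have hV := fun t ht => hasDerivWithinAt_frobenius_norm_sq_sub K (hX t ht)
    refine antitoneOn_of_hasDerivWithinAt_nonpos hD (fun t ht => (hV t ht).continuousWithinAt)
      (fun t ht => (hV t (interior_subset ht)).mono interior_subset) fun t ht => ?_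
    linarith [hX' t (interior_subset ht)]
  intro a ha b hb hab
  exact (pow_le_pow_iff_left₀ (norm_nonneg _) (norm_nonneg _) two_ne_zero).1 (hsq ha hb hab)

end Matrix

theorem stmt_13_general (m : ℕ)
    (Kstar : Matrix (Fin m) (Fin m) ℝ)
    (KU : Matrix (Fin m) (Fin m) ℝ) (hKU : KU.IsDiag) (hKUpos : ∀ i, 0 ≤ KU i i)
    (𝒦 : Matrix (Fin m) (Fin m) ℝ →ₗ[ℝ] Matrix (Fin m) (Fin m) ℝ)
    (h𝒦skew : ∀ A : Matrix (Fin m) (Fin m) ℝ, Aᵀ = -A → (𝒦 A)ᵀ = -(𝒦 A))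
    (h𝒦psd : ∀ A : Matrix (Fin m) (Fin m) ℝ, 0 ≤ (Aᵀ * 𝒦 A).trace)
    (O L X B1 B2 U Ω : ℝ → Matrix (Fin m) (Fin m) ℝ)
    (hLdiag : ∀ t ∈ Set.Ici (0 : ℝ), (L t).IsDiag)
    (hOorth : ∀ t ∈ Set.Ici (0 : ℝ), O t * (O t)ᵀ = 1)
    (hX : ∀ t, X t = (O t)ᵀ * NormedSpace.exp (L t) * O t)
    (hB1 : ∀ t, B1 t = NormedSpace.exp (L t) - O t * Kstar * (O t)ᵀ)
    (hB2 : ∀ t, B2 t = X t * Kstarᵀ - Kstarᵀ * X t)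
    (hU : ∀ t, U t = -(KU * NormedSpace.exp (-L t) * Matrix.diagonal (B1 t).diag))
    (hΩ : ∀ t, Ω t = 𝒦 ((1 / 2 : ℝ) • (B2 t - (B2 t)ᵀ)))
    (hL : ∀ t ∈ Set.Ici (0 : ℝ), HasDerivWithinAt L (U t) (Set.Ici (0 : ℝ)) t)
    (hO : ∀ t ∈ Set.Ici (0 : ℝ), HasDerivWithinAt O (O t * Ω t) (Set.Ici (0 : ℝ)) t) :
    AntitoneOn (fun t => ‖Kstar - X t‖) (Set.Ici (0 : ℝ)) ∧
      ∀ t ∈ Set.Ici (0 : ℝ), ‖Kstar - X t‖ ≤ ‖Kstar - X 0‖ := by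
  have hΩskew : ∀ t, (Ω t)ᵀ = -Ω t := fun t => by
    rw [hΩ t]
    refine h𝒦skew _ ?_
    rw [transpose_smul, transpose_sub, transpose_transpose, ← smul_neg, neg_sub]
  have hXsymm : ∀ t ∈ Set.Ici (0 : ℝ), (X t)ᵀ = X t := fun t ht => by
    rw [hX t, transpose_mul, transpose_mul, transpose_transpose,
      (hLdiag t ht).isSymm.exp.eq, Matrix.mul_assoc]
  have hUdiag : ∀ t ∈ Set.Ici (0 : ℝ), (U t).IsDiag := fun t ht => by
    rw [hU t]
    exact ((hKU.mul (hLdiag t ht).neg.exp).mul (isDiag_diagonal _)).neg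
  have hexpU : ∀ t ∈ Set.Ici (0 : ℝ), exp (L t) * U t = -(KU * diagonal (B1 t).diag) :=
    fun t ht => by
      rw [hU t, Matrix.mul_neg, ← Matrix.mul_assoc, ← Matrix.mul_assoc,
        (hLdiag t ht).exp_mul_mul_exp_neg hKU]
  have hXderiv : ∀ t ∈ Set.Ici (0 : ℝ), HasDerivWithinAt X
      (X t * Ω t - Ω t * X t + (O t)ᵀ * (exp (L t) * U t) * O t) (Set.Ici 0) t := fun t ht => by
    rw [funext hX]
    exact hasDerivWithinAt_transpose_mul_mul (hΩskew t) (hO t ht)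
      (hasDerivWithinAt_exp_of_isDiag hLdiag ht (hUdiag t ht) (hL t ht))
  have hanti := antitoneOn_norm_sub_of_hasDerivWithinAt (convex_Ici 0) Kstar hXderiv
    fun t ht => by
      rw [Matrix.mul_add, trace_add]
      refine add_nonneg ?_ ?_
      · rw [trace_transpose_sub_mul_commutator (hXsymm t ht) (hΩskew t), ← hB2 t, hΩ t]
        exact h𝒦psd _
      · rw [hX t, trace_transpose_sub_mul_conj (hOorth t ht), hexpU t ht,
          show O t * Kstar * (O t)ᵀ - exp (L t) = -B1 t by rw [hB1 t, neg_sub],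
          transpose_neg, neg_mul_neg]
        exact trace_transpose_mul_mul_diagonal_diag_nonneg hKU hKUpos _
  exact ⟨hanti, fun t ht => hanti Set.self_mem_Ici ht ht⟩

/-- along the tracker dynamics the Frobenius norm of the tracking
error `K* - X(t)` is nonincreasing on `[0, ∞)`; in particular the trajectory
`K* - X(t)` is globally bounded. (Here the ambient norm is the Frobenius norm.) -/
theorem stmt_13 (m : ℕ) (hm : 0 < m)
    (Kstar : Matrix (Fin m) (Fin m) ℝ)
    (KU : Matrix (Fin m) (Fin m) ℝ) (hKU : KU.IsDiag) (hKUpos : ∀ i, 0 ≤ KU i i)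
    (𝒦 : Matrix (Fin m) (Fin m) ℝ →ₗ[ℝ] Matrix (Fin m) (Fin m) ℝ)
    (h𝒦skew : ∀ A : Matrix (Fin m) (Fin m) ℝ, Aᵀ = -A → (𝒦 A)ᵀ = -(𝒦 A))
    (h𝒦psd : ∀ A : Matrix (Fin m) (Fin m) ℝ, 0 ≤ (Aᵀ * 𝒦 A).trace)
    (O L X B1 B2 U Ω : ℝ → Matrix (Fin m) (Fin m) ℝ)
    (hLdiag : ∀ t ∈ Set.Ici (0 : ℝ), (L t).IsDiag)
    (hOorth : ∀ t ∈ Set.Ici (0 : ℝ), O t * (O t)ᵀ = 1)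
    (hX : ∀ t, X t = (O t)ᵀ * NormedSpace.exp (L t) * O t)
    (hB1 : ∀ t, B1 t = NormedSpace.exp (L t) - O t * Kstar * (O t)ᵀ)
    (hB2 : ∀ t, B2 t = X t * Kstarᵀ - Kstarᵀ * X t)
    (hU : ∀ t, U t = -(KU * NormedSpace.exp (-L t) * Matrix.diagonal (B1 t).diag))
    (hΩ : ∀ t, Ω t = 𝒦 ((1 / 2 : ℝ) • (B2 t - (B2 t)ᵀ)))
    (hL : ∀ t ∈ Set.Ici (0 : ℝ), HasDerivWithinAt L (U t) (Set.Ici (0 : ℝ)) t)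
    (hO : ∀ t ∈ Set.Ici (0 : ℝ), HasDerivWithinAt O (O t * Ω t) (Set.Ici (0 : ℝ)) t) :
    AntitoneOn (fun t => ‖Kstar - X t‖) (Set.Ici (0 : ℝ)) ∧
      ∀ t ∈ Set.Ici (0 : ℝ), ‖Kstar - X t‖ ≤ ‖Kstar - X 0‖ :=
  stmt_13_general m Kstar KU hKU hKUpos 𝒦 h𝒦skew h𝒦psd O L X B1 B2 U Ω hLdiag hOorth hX hB1 hB2 hU
    hΩ hL hO
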